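/- arXiv:2504.05300 — 4 statements merged into one kernel-verified Lean document; each statement's English description precedes it below -/
import Mathlib

section
/- For every t ∈ [T], the probability that X_t^GMM falls outside the set A_t satisfies P{X_t^GMM ∉ A_t} ≤ C exp(−2 d log T) for some absolute constant C > 0. -/
open MeasureTheory Real Finset
open scoped RealInnerProductSpace BigOperators

noncomputable section

/-- Density of the Gaussian distribution `N(m, v I_d)` on `ℝ^d`. -/
def gaussV (d : ℕ) (v : ℝ) (m x : EuclideanSpace ℝ (Fin d)) : ℝ :=
  (2 * Real.pi * v) ^ (-(d : ℝ) / 2) * Real.exp (-‖x - m‖ ^ 2 / (2 * v))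

/-- Density of the Gaussian mixture `∑_k w_k N(√abar μ_k, I_d)`. -/
def mixDensity (d K : ℕ) (w : Fin K → ℝ) (μ : Fin K → EuclideanSpace ℝ (Fin d))
    (abar : ℝ) (x : EuclideanSpace ℝ (Fin d)) : ℝ :=
  ∑ k, w k * gaussV d 1 (Real.sqrt abar • μ k) x

/-- Posterior component weights `π_k^{(t)}(x)`. -/
def postWeight (d K : ℕ) (w : Fin K → ℝ) (μ : Fin K → EuclideanSpace ℝ (Fin d))
    (abar : ℝ) (k : Fin K) (x : EuclideanSpace ℝ (Fin d)) : ℝ :=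
  w k * Real.exp (-‖x - Real.sqrt abar • μ k‖ ^ 2 / 2) /
    ∑ i, w i * Real.exp (-‖x - Real.sqrt abar • μ i‖ ^ 2 / 2)

/-- Closed form of the score `∇ log p_{X_t^GMM}` of the diffused GMM. -/
def gmmScore (d K : ℕ) (w : Fin K → ℝ) (μ : Fin K → EuclideanSpace ℝ (Fin d))
    (abar : ℝ) (x : EuclideanSpace ℝ (Fin d)) : EuclideanSpace ℝ (Fin d) :=
  -x + Real.sqrt abar • ∑ k, postWeight d K w μ abar k x • μ k

/-- The Jacobian matrix `J_t(x)` of the diffused GMM score. -/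
def gmmJac (d K : ℕ) (w : Fin K → ℝ) (μ : Fin K → EuclideanSpace ℝ (Fin d))
    (abar : ℝ) (x : EuclideanSpace ℝ (Fin d)) : Matrix (Fin d) (Fin d) ℝ :=
  Matrix.of fun i j =>
    (if i = j then (-1 : ℝ) else 0) +
      abar * ((∑ k, postWeight d K w μ abar k x * (μ k i * μ k j)) -
        (∑ k, postWeight d K w μ abar k x * μ k i) *
          (∑ k, postWeight d K w μ abar k x * μ k j))

/-- The quantity `ζ_k^{(t)}(x)`, where `abar` plays the role of `ᾱ_t` and `a` that of `α_t`. -/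
def zeta (d K : ℕ) (w : Fin K → ℝ) (μ : Fin K → EuclideanSpace ℝ (Fin d))
    (abar a : ℝ) (k : Fin K) (x : EuclideanSpace ℝ (Fin d)) : ℝ :=
  (1 - a ^ 2) / (2 * a ^ 2) *
      (‖x - Real.sqrt abar • μ k‖ ^ 2 -
        ∑ i, postWeight d K w μ abar i x * ‖x - Real.sqrt abar • μ i‖ ^ 2) +
    (1 - a) / a ^ 2 *
      ⟪gmmScore d K w μ abar x,
        ∑ i, postWeight d K w μ abar i x • (Real.sqrt abar • (μ i - μ k))⟫

/-- The typical set `E_t`. -/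
def Eset (d K T : ℕ) (w : Fin K → ℝ) (μ : Fin K → EuclideanSpace ℝ (Fin d))
    (abar a C₁ C₂ : ℝ) : Set (EuclideanSpace ℝ (Fin d)) :=
  {x | Matrix.trace (1 + gmmJac d K w μ abar x) ≤ C₁ * Real.log ((K : ℝ) * T) ∧
    ∑ k, postWeight d K w μ abar k x * Real.exp (-(zeta d K w μ abar a k x)) ≤
      Real.exp (C₂ * (1 - a) ^ 2 * Real.log ((K : ℝ) * T) ^ 2)}

/-- The set `A_t`. -/
def Aset (d K T : ℕ) (w : Fin K → ℝ) (μ : Fin K → EuclideanSpace ℝ (Fin d))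
    (abar cR C₇ : ℝ) : Set (EuclideanSpace ℝ (Fin d)) :=
  {x | -(C₇ * d * Real.log ((d : ℝ) * T)) ≤ Real.log (mixDensity d K w μ abar x) ∧
    ‖x‖ ≤ Real.sqrt (2 * (T : ℝ) ^ (2 * cR) + 16 * d * Real.log T)}

/-- The set `T_k`. -/
def Tset (d K T : ℕ) (μ : Fin K → EuclideanSpace ℝ (Fin d))
    (abar C₅ : ℝ) (k : Fin K) : Set (EuclideanSpace ℝ (Fin d)) :=
  {x | ∀ i : Fin K,
    |⟪x - Real.sqrt abar • μ k, Real.sqrt abar • (μ i - μ k)⟫| ≤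
      C₅ * Real.sqrt (abar * Real.log ((K : ℝ) * T)) * ‖μ i - μ k‖}

/-- Forward (diffused) marginal density at noise level `abar`, starting from density `f₀`. -/
def fwdDensity (d : ℕ) (f₀ : EuclideanSpace ℝ (Fin d) → ℝ) (abar : ℝ)
    (x : EuclideanSpace ℝ (Fin d)) : ℝ :=
  ∫ y, gaussV d (1 - abar) (Real.sqrt abar • y) x * f₀ y

/-- Stein score of a density `p`. -/
def scoreOf (d : ℕ) (p : EuclideanSpace ℝ (Fin d) → ℝ)
    (x : EuclideanSpace ℝ (Fin d)) : EuclideanSpace ℝ (Fin d) :=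
  gradient (fun y => Real.log (p y)) x

/-- Truncation (clipping) of a score estimate at radius `R`. -/
def clipFn (d : ℕ) (R : ℝ) (s : EuclideanSpace ℝ (Fin d) → EuclideanSpace ℝ (Fin d))
    (x : EuclideanSpace ℝ (Fin d)) : EuclideanSpace ℝ (Fin d) :=
  if ‖s x‖ ≤ R then s x else 0

/-- Total-variation distance between two densities on `ℝ^d`. -/
def tvDist (d : ℕ) (p q : EuclideanSpace ℝ (Fin d) → ℝ) : ℝ :=
  (1 / 2) * ∫ x, |p x - q x|

/-- Density of the one-step (DDPM-type) reverse Gaussian transition with rate `a`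
and drift field `s`, from `y` to `x`. -/
def ddpmKernel (d : ℕ) (a : ℝ) (s : EuclideanSpace ℝ (Fin d) → EuclideanSpace ℝ (Fin d))
    (y x : EuclideanSpace ℝ (Fin d)) : ℝ :=
  gaussV d (1 - a) ((Real.sqrt a)⁻¹ • (y + (1 - a) • s y)) x

/-- Density of `Y_{T-n}` for the DDPM sampler run with rates `α` and score estimates `s`. -/
def ddpmDensity (d T : ℕ) (α : ℕ → ℝ)
    (s : ℕ → EuclideanSpace ℝ (Fin d) → EuclideanSpace ℝ (Fin d)) :
    ℕ → EuclideanSpace ℝ (Fin d) → ℝ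
  | 0 => gaussV d 1 0
  | n + 1 => fun x =>
      ∫ y, ddpmKernel d (α (T - n)) (s (T - n)) y x * ddpmDensity d T α s n y

/-- Density (on `ℝ^d`) of `Ȳ_{T-n}^-` for the auxiliary reverse process. -/
def pbarMinus (d K T : ℕ) (w : Fin K → ℝ) (μ : Fin K → EuclideanSpace ℝ (Fin d))
    (αbar α : ℕ → ℝ) (C₁ C₂ : ℝ) : ℕ → EuclideanSpace ℝ (Fin d) → ℝ
  | 0 => (Eset d K T w μ (αbar T) (α T) C₁ C₂).indicator (gaussV d 1 0)
  | n + 1 =>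
      (Eset d K T w μ (αbar (T - n)) (α (T - n)) C₁ C₂).indicator fun x =>
        ∫ y in Eset d K T w μ (αbar (T - n)) (α (T - n)) C₁ C₂,
          ddpmKernel d (α (T - n)) (gmmScore d K w μ (αbar (T - n))) y x *
            min (mixDensity d K w μ (αbar (T - n)) y)
              (pbarMinus d K T w μ αbar α C₁ C₂ n y)

/-- The function `Δ_t(x) = p_{X_t^GMM}(x) - p_{Ȳ_t}(x)`. -/
def DeltaFn (d K T : ℕ) (w : Fin K → ℝ) (μ : Fin K → EuclideanSpace ℝ (Fin d))
    (αbar α : ℕ → ℝ) (C₁ C₂ : ℝ) (t : ℕ) (x : EuclideanSpace ℝ (Fin d)) : ℝ :=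
  mixDensity d K w μ (αbar t) x -
    min (mixDensity d K w μ (αbar t) x) (pbarMinus d K T w μ αbar α C₁ C₂ (T - t) x)

end

/-!
Split the complement of `A_t` into the points outside the ball of radius
`R = √(2 T^(2 c_R) + 16 d log T)` and the points of the ball where the density is below
`ε = (d T)^(-C₇ d)`. When every mean `√ᾱ_t μ_k` lies at distance at least `√(8 d log T)` inside
that sphere, a Gaussian tail bound controls the first part by `2^d T^(-3d)`, and the second has
mass at most `ε` times (a Gaussian majorant of) the volume of the ball, which is `≤ T^(-2d)` once
`C₇ ≥ c_R + 8`. The means are that deep inside as soon as `ᾱ_t ≤ 1`, which the logistic recursion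
for `ᾱ` preserves while `c₁ log T / T ≤ 1`. Otherwise `T < 4 c₁²`, so the means are bounded by a
constant `B`: either `d log T ≥ B²` and they are again deep inside, or `d log T < B²` and the
trivial bound `1 ≤ e^(2B²) T^(-2d)` suffices.
-/

lemma setIntegral_le_integral_of_le_on {α : Type*} [MeasurableSpace α] {μ : Measure α}
    {f g : α → ℝ} {s : Set α} (hs : MeasurableSet s) (hf : IntegrableOn f s μ)
    (hg : Integrable g μ) (hg0 : 0 ≤ g) (hfg : ∀ x ∈ s, f x ≤ g x) :
    ∫ x in s, f x ∂μ ≤ ∫ x, g x ∂μ :=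
  (setIntegral_mono_on hf hg.integrableOn hs hfg).trans
    (setIntegral_le_integral hg (ae_of_all _ hg0))

section Gaussian

variable {d : ℕ}

lemma integrable_exp_neg_mul_norm_sub_sq {b : ℝ} (hb : 0 < b) (m : EuclideanSpace ℝ (Fin d)) :
    Integrable fun x : EuclideanSpace ℝ (Fin d) => exp (-b * ‖x - m‖ ^ 2) := by
  have h := (GaussianFourier.integrable_cexp_neg_mul_sq_norm_add
    (b := (b : ℂ)) (by simpa using hb) 0 (0 : EuclideanSpace ℝ (Fin d))).norm
  simp only [Complex.norm_exp, zero_mul, add_zero, ← Complex.ofReal_pow, neg_mul,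
    ← Complex.ofReal_mul, ← Complex.ofReal_neg, Complex.ofReal_re] at h
  simpa using h.comp_sub_right m

lemma integral_exp_neg_mul_norm_sub_sq {b : ℝ} (hb : 0 < b) (m : EuclideanSpace ℝ (Fin d)) :
    ∫ x : EuclideanSpace ℝ (Fin d), exp (-b * ‖x - m‖ ^ 2) = (π / b) ^ ((d : ℝ) / 2) := by
  rw [integral_sub_right_eq_self (fun x => exp (-b * ‖x‖ ^ 2)) m,
    GaussianFourier.integral_rexp_neg_mul_sq_norm hb, finrank_euclideanSpace_fin]

lemma gaussV_one_eq (m x : EuclideanSpace ℝ (Fin d)) :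
    gaussV d 1 m x = (2 * π) ^ (-(d : ℝ) / 2) * exp (-(1 / 2) * ‖x - m‖ ^ 2) := by
  rw [gaussV, mul_one]
  ring_nf

lemma gaussV_one_nonneg (m x : EuclideanSpace ℝ (Fin d)) : 0 ≤ gaussV d 1 m x := by
  rw [gaussV_one_eq]; positivity

lemma continuous_gaussV_one (m : EuclideanSpace ℝ (Fin d)) : Continuous (gaussV d 1 m) := by
  rw [funext (gaussV_one_eq m)]
  fun_prop

lemma integrable_gaussV_one (m : EuclideanSpace ℝ (Fin d)) : Integrable (gaussV d 1 m) := by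
  simp_rw [funext (gaussV_one_eq m)]
  exact (integrable_exp_neg_mul_norm_sub_sq (by norm_num) m).const_mul _

lemma integral_gaussV_one (m : EuclideanSpace ℝ (Fin d)) :
    ∫ x, gaussV d 1 m x = 1 := by
  rw [funext (gaussV_one_eq m), integral_const_mul,
    integral_exp_neg_mul_norm_sub_sq (by norm_num) m, div_div_eq_mul_div, div_one, mul_comm π,
    ← rpow_add (by positivity), neg_div, neg_add_cancel, rpow_zero]

lemma setIntegral_gaussV_one_norm_gt_le {m : EuclideanSpace ℝ (Fin d)} {R u : ℝ} (hu : 0 ≤ u)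
    (hm : ‖m‖ + u ≤ R) :
    ∫ x in {x | R < ‖x‖}, gaussV d 1 m x ≤ 2 ^ d * exp (-(3 / 8) * u ^ 2) := by
  set g : EuclideanSpace ℝ (Fin d) → ℝ := fun x =>
    exp (-(3 / 8) * u ^ 2) * ((2 * π) ^ (-(d : ℝ) / 2) * exp (-(1 / 8) * ‖x - m‖ ^ 2))
  have hle : ∀ x ∈ {x : EuclideanSpace ℝ (Fin d) | R < ‖x‖}, gaussV d 1 m x ≤ g x := by
    intro x hx
    have hux : u ≤ ‖x - m‖ := by
      linarith [norm_sub_norm_le x m, show R < ‖x‖ from hx]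
    have hexp : exp (-(1 / 2) * ‖x - m‖ ^ 2) ≤
        exp (-(3 / 8) * u ^ 2) * exp (-(1 / 8) * ‖x - m‖ ^ 2) := by
      rw [← exp_add]
      exact exp_le_exp.mpr (by nlinarith)
    calc gaussV d 1 m x
        ≤ (2 * π) ^ (-(d : ℝ) / 2) *
          (exp (-(3 / 8) * u ^ 2) * exp (-(1 / 8) * ‖x - m‖ ^ 2)) := by
          rw [gaussV_one_eq]; gcongr
      _ = g x := by ring
  have hg : Integrable g :=
    ((integrable_exp_neg_mul_norm_sub_sq (by norm_num) m).const_mul _).const_mul _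
  have hfactor : (2 * π) ^ (-(d : ℝ) / 2) * (π / (1 / 8)) ^ ((d : ℝ) / 2) = 2 ^ d := by
    rw [show π / (1 / 8) = 4 * (2 * π) by ring, mul_rpow (x := 4) (by norm_num) (by positivity),
      mul_left_comm, ← rpow_add (by positivity), neg_div, neg_add_cancel, rpow_zero, mul_one,
      rpow_div_two_eq_sqrt _ (by norm_num), show √4 = 2 by
        rw [show (4 : ℝ) = 2 ^ 2 by norm_num, sqrt_sq (by norm_num)], rpow_natCast]
  calc ∫ x in {x | R < ‖x‖}, gaussV d 1 m x ≤ ∫ x, g x :=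
        setIntegral_le_integral_of_le_on (measurableSet_lt measurable_const measurable_norm)
          (integrable_gaussV_one m).integrableOn hg (fun x => by positivity) hle
    _ = 2 ^ d * exp (-(3 / 8) * u ^ 2) := by
        rw [integral_const_mul, integral_const_mul,
          integral_exp_neg_mul_norm_sub_sq (by norm_num) m, hfactor, mul_comm]

/-- The weight `exp (d - d ‖x‖² / R²)` is at least `1` on the ball of radius `R` and has total
mass `exp d * (π R² / d) ^ (d / 2)`, which stands in for the volume of the ball. -/
lemma setIntegral_norm_le_and_lt_le {p : EuclideanSpace ℝ (Fin d) → ℝ} (hp : Integrable p)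
    (hpm : Measurable p) (hd : 0 < d) {R ε : ℝ} (hR : 0 < R) (hε : 0 ≤ ε) :
    ∫ x in {x | ‖x‖ ≤ R ∧ p x < ε}, p x ≤ ε * exp d * (π * R ^ 2 / d) ^ ((d : ℝ) / 2) := by
  have hd' : (0 : ℝ) < d := Nat.cast_pos.mpr hd
  set s : ℝ := d / R ^ 2
  have hs : 0 < s := by positivity
  have hS : MeasurableSet {x : EuclideanSpace ℝ (Fin d) | ‖x‖ ≤ R ∧ p x < ε} :=
    (measurableSet_le measurable_norm measurable_const).inter
      (measurableSet_lt hpm measurable_const)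
  have hle : ∀ x ∈ {x : EuclideanSpace ℝ (Fin d) | ‖x‖ ≤ R ∧ p x < ε},
      p x ≤ ε * exp d * exp (-s * ‖x - 0‖ ^ 2) := by
    rintro x ⟨hxR, hpx⟩
    have hsx : s * ‖x‖ ^ 2 ≤ (d : ℝ) := by
      calc s * ‖x‖ ^ 2 ≤ s * R ^ 2 := by gcongr
        _ = (d : ℝ) := div_mul_cancel₀ _ (by positivity)
    have hone : 1 ≤ exp d * exp (-s * ‖x - 0‖ ^ 2) := by
      rw [← exp_add, sub_zero]
      exact one_le_exp (by linarith)
    calc p x ≤ ε * 1 := by linarith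
      _ ≤ ε * (exp d * exp (-s * ‖x - 0‖ ^ 2)) := by gcongr
      _ = _ := by ring
  calc ∫ x in {x | ‖x‖ ≤ R ∧ p x < ε}, p x
      ≤ ∫ x, ε * exp d * exp (-s * ‖x - 0‖ ^ 2) :=
        setIntegral_le_integral_of_le_on hS hp.integrableOn
          ((integrable_exp_neg_mul_norm_sub_sq hs 0).const_mul _) (fun x => by positivity) hle
    _ = ε * exp d * (π * R ^ 2 / d) ^ ((d : ℝ) / 2) := by
        rw [integral_const_mul, integral_exp_neg_mul_norm_sub_sq hs, div_div_eq_mul_div]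

end Gaussian

section Mixture

variable {d K : ℕ} (w : Fin K → ℝ) (μ : Fin K → EuclideanSpace ℝ (Fin d)) (abar : ℝ)

lemma integrable_mixDensity : Integrable (mixDensity d K w μ abar) :=
  integrable_finsetSum _ fun _ _ => (integrable_gaussV_one _).const_mul _

lemma continuous_mixDensity : Continuous (mixDensity d K w μ abar) :=
  continuous_finsetSum _ fun _ _ => continuous_const.mul (continuous_gaussV_one _)

variable {w}

lemma mixDensity_nonneg (hw : ∀ k, 0 ≤ w k) (x : EuclideanSpace ℝ (Fin d)) :
    0 ≤ mixDensity d K w μ abar x :=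
  sum_nonneg fun k _ => mul_nonneg (hw k) (gaussV_one_nonneg _ _)

lemma setIntegral_mixDensity_le_one (hw : ∀ k, 0 ≤ w k) (hw1 : ∑ k, w k = 1)
    (s : Set (EuclideanSpace ℝ (Fin d))) : ∫ x in s, mixDensity d K w μ abar x ≤ 1 := by
  calc ∫ x in s, mixDensity d K w μ abar x ≤ ∫ x, mixDensity d K w μ abar x :=
        setIntegral_le_integral (integrable_mixDensity w μ abar)
          (ae_of_all _ (mixDensity_nonneg μ abar hw))
    _ = 1 := by
        unfold mixDensity
        rw [integral_finsetSum _ fun _ _ => (integrable_gaussV_one _).const_mul _]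
        simp_rw [integral_const_mul, integral_gaussV_one, mul_one, hw1]

lemma setIntegral_mixDensity_norm_gt_le (hw : ∀ k, 0 ≤ w k) (hw1 : ∑ k, w k = 1) {R u : ℝ}
    (hu : 0 ≤ u) (hm : ∀ k, ‖√abar • μ k‖ + u ≤ R) :
    ∫ x in {x | R < ‖x‖}, mixDensity d K w μ abar x ≤ 2 ^ d * exp (-(3 / 8) * u ^ 2) := by
  unfold mixDensity
  rw [integral_finsetSum _ fun _ _ =>
    ((integrable_gaussV_one _).const_mul _).integrableOn]
  calc ∑ k, ∫ x in {x | R < ‖x‖}, w k * gaussV d 1 (√abar • μ k) x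
      = ∑ k, w k * ∫ x in {x | R < ‖x‖}, gaussV d 1 (√abar • μ k) x := by
        simp_rw [integral_const_mul]
    _ ≤ ∑ k, w k * (2 ^ d * exp (-(3 / 8) * u ^ 2)) :=
        sum_le_sum fun k _ => mul_le_mul_of_nonneg_left
          (setIntegral_gaussV_one_norm_gt_le hu (hm k)) (hw k)
    _ = 2 ^ d * exp (-(3 / 8) * u ^ 2) := by rw [← sum_mul, hw1, one_mul]

end Mixture

section Numerics

variable {d T : ℕ}

lemma two_pow_mul_exp_le (hT : 2 ≤ T) :
    (2 : ℝ) ^ d * exp (-(3 / 8) * √(8 * d * log T) ^ 2) ≤ exp (-(2 * d * log T)) := by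
  have hlog : log 2 ≤ log T := log_le_log (by norm_num) (by exact_mod_cast hT)
  have hL : 0 ≤ log T := (log_pos one_lt_two).le.trans hlog
  rw [sq_sqrt (by positivity), ← exp_log (show (0 : ℝ) < 2 ^ d by positivity), log_pow,
    ← exp_add]
  exact exp_le_exp.mpr (by nlinarith [mul_le_mul_of_nonneg_left hlog (Nat.cast_nonneg d)])

lemma log_pi_mul_div_le (hd : 1 ≤ d) (hT : 2 ≤ T) {cR : ℝ} (hcR : 0 ≤ cR) :
    log (π * (2 * (T : ℝ) ^ (2 * cR) + 16 * d * log T) / d) ≤ (2 * cR + 7) * log T := by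
  have hd' : (1 : ℝ) ≤ d := by exact_mod_cast hd
  have hT' : (2 : ℝ) ≤ T := by exact_mod_cast hT
  have hL : log 2 ≤ log T := log_le_log (by norm_num) hT'
  set Y := (T : ℝ) ^ (2 * cR + 1)
  have hXY : (T : ℝ) ^ (2 * cR) ≤ Y := rpow_le_rpow_of_exponent_le (by linarith) (by linarith)
  have hLY : log T ≤ Y := by
    have hTY := rpow_le_rpow_of_exponent_le (x := (T : ℝ)) (by linarith)
      (show (1 : ℝ) ≤ 2 * cR + 1 by linarith)
    rw [rpow_one] at hTY
    linarith [log_le_sub_one_of_pos (show (0 : ℝ) < T by linarith)]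
  have hA : π * (2 * (T : ℝ) ^ (2 * cR) + 16 * d * log T) / d ≤ 2 ^ 6 * Y := by
    have hsum : 2 * (T : ℝ) ^ (2 * cR) + 16 * d * log T ≤ 18 * (d * Y) := by
      nlinarith [mul_le_mul_of_nonneg_left hLY (Nat.cast_nonneg (α := ℝ) d),
        mul_le_mul_of_nonneg_right hd' (show 0 ≤ Y by positivity)]
    rw [div_le_iff₀ (by positivity)]
    nlinarith [mul_le_mul_of_nonneg_left hsum pi_pos.le, pi_lt_d2, show 0 ≤ d * Y by positivity]
  calc log (π * (2 * (T : ℝ) ^ (2 * cR) + 16 * d * log T) / d)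
      ≤ log (2 ^ 6 * Y) := log_le_log (by positivity) hA
    _ = 6 * log 2 + (2 * cR + 1) * log T := by
        rw [log_mul (by norm_num) (by positivity), log_pow, log_rpow (by linarith)]
        push_cast
        ring
    _ ≤ (2 * cR + 7) * log T := by linarith

lemma exp_mul_exp_mul_rpow_le (hd : 1 ≤ d) (hT : 2 ≤ T) {cR C₇ : ℝ} (hcR : 0 ≤ cR)
    (hC₇ : cR + 8 ≤ C₇) :
    exp (-(C₇ * d * log ((d : ℝ) * T))) * exp d *
        (π * √(2 * (T : ℝ) ^ (2 * cR) + 16 * d * log T) ^ 2 / d) ^ ((d : ℝ) / 2) ≤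
      exp (-(2 * d * log T)) := by
  have hd' : (1 : ℝ) ≤ d := by exact_mod_cast hd
  have hT' : (2 : ℝ) ≤ T := by exact_mod_cast hT
  have hL : 1 / 2 < log T := by
    linarith [log_two_gt_d9, log_le_log (show (0 : ℝ) < 2 by norm_num) hT']
  have hdT : log T ≤ log ((d : ℝ) * T) := log_le_log (by linarith) (by nlinarith)
  have hC : (cR + 8) * d * log T ≤ C₇ * d * log ((d : ℝ) * T) :=
    mul_le_mul (mul_le_mul_of_nonneg_right hC₇ (by positivity)) hdT (by linarith)
      (mul_nonneg (by linarith) (by positivity))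
  have hlogA := mul_le_mul_of_nonneg_right (log_pi_mul_div_le hd hT hcR)
    (show (0 : ℝ) ≤ d / 2 by positivity)
  rw [sq_sqrt (by positivity), rpow_def_of_pos (by positivity), ← exp_add, ← exp_add]
  exact exp_le_exp.mpr (by nlinarith)

lemma add_sqrt_le_radius {cR a : ℝ} (ha : 0 ≤ a) (h : a ≤ (T : ℝ) ^ cR ∨ a ^ 2 ≤ d * log T) :
    a + √(8 * d * log T) ≤ √(2 * (T : ℝ) ^ (2 * cR) + 16 * d * log T) := by
  have hs := sq_sqrt (show 0 ≤ 8 * d * log T by positivity)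
  rw [mul_comm 2 cR, rpow_mul (by positivity), rpow_two]
  refine (le_sqrt (by positivity) (by positivity)).mpr ?_
  rcases h with h | h
  · nlinarith [sq_nonneg (a - √(8 * d * log T))]
  · nlinarith [sq_nonneg (2 * a - √(8 * d * log T)), sq_nonneg ((T : ℝ) ^ cR)]

end Numerics

section TypicalSet

variable {d K T : ℕ} {w : Fin K → ℝ} {μ : Fin K → EuclideanSpace ℝ (Fin d)} {abar cR C₇ : ℝ}

lemma compl_Aset_subset :
    (Aset d K T w μ abar cR C₇)ᶜ ⊆
      {x | ‖x‖ ≤ √(2 * (T : ℝ) ^ (2 * cR) + 16 * d * log T) ∧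
          mixDensity d K w μ abar x < exp (-(C₇ * d * log ((d : ℝ) * T)))} ∪
        {x | √(2 * (T : ℝ) ^ (2 * cR) + 16 * d * log T) < ‖x‖} := by
  intro x hx
  by_cases hxR : ‖x‖ ≤ √(2 * (T : ℝ) ^ (2 * cR) + 16 * d * log T)
  · refine Or.inl ⟨hxR, ?_⟩
    have hlog : log (mixDensity d K w μ abar x) < -(C₇ * d * log ((d : ℝ) * T)) :=
      not_le.mp fun h => hx ⟨h, hxR⟩
    rcases le_or_gt (mixDensity d K w μ abar x) 0 with h0 | h0
    · exact h0.trans_lt (exp_pos _)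
    · exact (log_lt_iff_lt_exp h0).mp hlog
  · exact Or.inr (not_le.mp hxR)

lemma setIntegral_compl_Aset_le (hd : 1 ≤ d) (hT : 2 ≤ T) (hw : ∀ k, 0 ≤ w k)
    (hw1 : ∑ k, w k = 1) (hcR : 0 ≤ cR) (hC₇ : cR + 8 ≤ C₇)
    (hμ : ∀ k, ‖√abar • μ k‖ + √(8 * d * log T) ≤
      √(2 * (T : ℝ) ^ (2 * cR) + 16 * d * log T)) :
    ∫ x in (Aset d K T w μ abar cR C₇)ᶜ, mixDensity d K w μ abar x ≤
      2 * exp (-(2 * d * log T)) := by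
  set R := √(2 * (T : ℝ) ^ (2 * cR) + 16 * d * log T)
  set p := mixDensity d K w μ abar
  have hp : Integrable p := integrable_mixDensity w μ abar
  have hL : 0 < log T := log_pos (by exact_mod_cast hT)
  have hR : 0 < R := sqrt_pos.mpr (by positivity)
  have hdisj : Disjoint {x | ‖x‖ ≤ R ∧ p x < exp (-(C₇ * d * log ((d : ℝ) * T)))}
      {x | R < ‖x‖} :=
    Set.disjoint_left.mpr fun _ h1 h2 => (not_lt.mpr h1.1) h2
  calc ∫ x in (Aset d K T w μ abar cR C₇)ᶜ, p x
      ≤ ∫ x in {x | ‖x‖ ≤ R ∧ p x < exp (-(C₇ * d * log ((d : ℝ) * T)))} ∪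
          {x | R < ‖x‖}, p x :=
        setIntegral_mono_set hp.integrableOn (ae_of_all _ (mixDensity_nonneg μ abar hw))
          compl_Aset_subset.eventuallyLE
    _ = (∫ x in {x | ‖x‖ ≤ R ∧ p x < exp (-(C₇ * d * log ((d : ℝ) * T)))}, p x) +
          ∫ x in {x | R < ‖x‖}, p x :=
        setIntegral_union hdisj (measurableSet_lt measurable_const measurable_norm)
          hp.integrableOn hp.integrableOn
    _ ≤ exp (-(2 * d * log T)) + exp (-(2 * d * log T)) := by
        gcongr
        · exact (setIntegral_norm_le_and_lt_le hp (continuous_mixDensity w μ abar).measurable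
            hd hR (exp_pos _).le).trans (exp_mul_exp_mul_rpow_le hd hT hcR hC₇)
        · exact (setIntegral_mixDensity_norm_gt_le μ abar hw hw1 (sqrt_nonneg _) hμ).trans
            (two_pow_mul_exp_le hT)
    _ = 2 * exp (-(2 * d * log T)) := by ring

end TypicalSet

section Schedule

lemma invariant_of_backward_recursion {T : ℕ} {a : ℕ → ℝ} {f : ℝ → ℝ} {P : ℝ → Prop}
    (hrec : ∀ t, 2 ≤ t → t ≤ T → a (t - 1) = f (a t)) (hf : ∀ x, P x → P (f x))
    (hT : P (a T)) {t : ℕ} (ht : 1 ≤ t) (htT : t ≤ T) : P (a t) := by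
  refine Nat.decreasingInduction' (P := fun k => P (a k)) (fun k hkT htk ih => ?_) htT hT
  have hk := hrec (k + 1) (by omega) hkT
  rw [Nat.add_sub_cancel] at hk
  exact hk ▸ hf _ ih

lemma logistic_step_le {a b c : ℝ} (hc : 0 ≤ c) (hcb : c ≤ b) (ha : a ≤ 1 + b) :
    a + c * a * (1 - a) ≤ 1 + b := by
  rcases le_or_gt a 1 with h | h
  · nlinarith [mul_nonneg hc (sq_nonneg (a - 1 / 2))]
  · nlinarith [mul_nonneg hc (sub_nonneg.mpr h.le)]

lemma logistic_step_mem_Icc {a c : ℝ} (hc : 0 ≤ c) (hc1 : c ≤ 1) (ha : a ∈ Set.Icc 0 1) :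
    a + c * a * (1 - a) ∈ Set.Icc 0 1 := by
  obtain ⟨ha0, ha1⟩ := ha
  have h : 0 ≤ a * (1 - a) := mul_nonneg ha0 (by linarith)
  constructor <;> nlinarith [mul_le_mul_of_nonneg_right hc1 h]

lemma log_div_self_mem_Icc {x : ℝ} (hx : 1 ≤ x) : log x / x ∈ Set.Icc 0 1 :=
  ⟨div_nonneg (log_nonneg hx) (by linarith),
    div_le_one_of_le₀ ((log_le_sub_one_of_pos (by linarith)).trans (by linarith)) (by linarith)⟩

variable {T : ℕ} {c₀ c₁ : ℝ} {αbar : ℕ → ℝ}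

lemma schedule_le (hT : 1 ≤ T) (hc₀ : 0 ≤ c₀) (hc₁ : 0 ≤ c₁)
    (hbase : αbar T = (T : ℝ) ^ (-c₀))
    (hrec : ∀ t : ℕ, 2 ≤ t → t ≤ T →
      αbar (t - 1) = αbar t + c₁ * (log T / T) * αbar t * (1 - αbar t))
    {t : ℕ} (ht : 1 ≤ t) (htT : t ≤ T) : αbar t ≤ 1 + c₁ := by
  have hT' : (1 : ℝ) ≤ T := by exact_mod_cast hT
  obtain ⟨hL0, hL1⟩ := log_div_self_mem_Icc hT'
  refine invariant_of_backward_recursion (P := (· ≤ 1 + c₁)) hrec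
    (fun x hx => logistic_step_le (mul_nonneg hc₁ hL0) (mul_le_of_le_one_right hc₁ hL1) hx)
    ?_ ht htT
  rw [hbase]
  linarith [rpow_le_one_of_one_le_of_nonpos hT' (neg_nonpos.mpr hc₀)]

lemma schedule_mem_Icc (hT : 1 ≤ T) (hc₀ : 0 ≤ c₀) (hc₁ : 0 ≤ c₁)
    (hstep : c₁ * (log T / T) ≤ 1) (hbase : αbar T = (T : ℝ) ^ (-c₀))
    (hrec : ∀ t : ℕ, 2 ≤ t → t ≤ T →
      αbar (t - 1) = αbar t + c₁ * (log T / T) * αbar t * (1 - αbar t))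
    {t : ℕ} (ht : 1 ≤ t) (htT : t ≤ T) : αbar t ∈ Set.Icc 0 1 := by
  have hT' : (1 : ℝ) ≤ T := by exact_mod_cast hT
  refine invariant_of_backward_recursion (P := (· ∈ Set.Icc 0 1)) hrec
    (fun x hx => logistic_step_mem_Icc (mul_nonneg hc₁ (log_div_self_mem_Icc hT').1) hstep hx)
    ?_ ht htT
  rw [hbase]
  exact ⟨by positivity, rpow_le_one_of_one_le_of_nonpos hT' (neg_nonpos.mpr hc₀)⟩

lemma lt_four_mul_sq_of_one_lt_mul_log_div {x c : ℝ} (hx : 1 ≤ x) (h : 1 < c * (log x / x)) :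
    x < 4 * c ^ 2 := by
  have hx0 : 0 < x := by linarith
  have hs : 0 < √x := sqrt_pos.mpr hx0
  have hlog : log x < 2 * √x := by
    have := log_le_sub_one_of_pos hs
    rw [log_sqrt hx0.le] at this
    linarith
  have hxc : x < c * log x := by rwa [mul_div_assoc', one_lt_div hx0] at h
  have hc : 0 < c := by nlinarith [log_nonneg hx]
  have hsx : √x * √x = x := mul_self_sqrt hx0.le
  have hsc : √x < 2 * c := by nlinarith [mul_lt_mul_of_pos_left hlog hc]
  nlinarith

lemma norm_sqrt_schedule_smul_le {d K : ℕ} {cR : ℝ} {μ : Fin K → EuclideanSpace ℝ (Fin d)}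
    (hT : 1 ≤ T) (hc₀ : 0 ≤ c₀) (hc₁ : 0 ≤ c₁) (hcR : 0 ≤ cR)
    (hμ : ∀ k, ‖μ k‖ ≤ (T : ℝ) ^ cR) (hbase : αbar T = (T : ℝ) ^ (-c₀))
    (hrec : ∀ t : ℕ, 2 ≤ t → t ≤ T →
      αbar (t - 1) = αbar t + c₁ * (log T / T) * αbar t * (1 - αbar t))
    {t : ℕ} (ht : 1 ≤ t) (htT : t ≤ T) :
    (∀ k, ‖√(αbar t) • μ k‖ ≤ (T : ℝ) ^ cR) ∨
      ∀ k, ‖√(αbar t) • μ k‖ ≤ √(1 + c₁) * (4 * c₁ ^ 2) ^ cR := by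
  have hT' : (1 : ℝ) ≤ T := by exact_mod_cast hT
  simp_rw [norm_smul, norm_of_nonneg (sqrt_nonneg _)]
  by_cases hstep : c₁ * (log T / T) ≤ 1
  · have h1 : √(αbar t) ≤ 1 :=
      sqrt_le_one.mpr (schedule_mem_Icc hT hc₀ hc₁ hstep hbase hrec ht htT).2
    exact Or.inl fun k => by nlinarith [hμ k, norm_nonneg (μ k), sqrt_nonneg (αbar t)]
  · have hTc := lt_four_mul_sq_of_one_lt_mul_log_div hT' (not_le.mp hstep)
    refine Or.inr fun k => mul_le_mul (sqrt_le_sqrt (schedule_le hT hc₀ hc₁ hbase hrec ht htT))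
      ((hμ k).trans (rpow_le_rpow (by linarith) hTc.le hcR)) (norm_nonneg _) (sqrt_nonneg _)

end Schedule

/-- Lemma 6, claim (68). For every `t ∈ [T]`, the probability that
`X_t^GMM` falls outside the set `A_t` satisfies `P{X_t^GMM ∉ A_t} ≤ C exp(−2 d log T)`
for some absolute constant `C > 0`. -/
theorem stmt8 :
    ∀ cR : ℝ, 0 < cR →
      ∃ c₀₀ c₁₀ C₇₀ : ℝ, 0 < c₀₀ ∧ 0 < c₁₀ ∧ 0 < C₇₀ ∧
        ∀ c₀ c₁ C₇ : ℝ, c₀₀ ≤ c₀ → c₁₀ ≤ c₁ → C₇₀ ≤ C₇ → 4 < c₁ / c₀ →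
          ∃ C : ℝ, 0 < C ∧
            ∀ (d K T : ℕ), 1 ≤ d → 1 ≤ K → 1 ≤ T →
              ∀ (w : Fin K → ℝ) (μ : Fin K → EuclideanSpace ℝ (Fin d)),
                (∀ k, w k ∈ Set.Ioo (0 : ℝ) 1) → (∑ k, w k = 1) →
                (∀ k, ‖μ k‖ ≤ (T : ℝ) ^ cR) →
                ∀ (αbar α : ℕ → ℝ),
                  αbar T = (T : ℝ) ^ (-c₀) →
                  (∀ t : ℕ, 2 ≤ t → t ≤ T →
                    αbar (t - 1) = αbar t + c₁ * (Real.log T / T) * αbar t * (1 - αbar t)) →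
                  (∀ t : ℕ, 2 ≤ t → t ≤ T → α t = αbar t / αbar (t - 1)) →
                  α 1 = αbar 1 →
                  ∀ t : ℕ, 1 ≤ t → t ≤ T →
                    (∫ x in (Aset d K T w μ (αbar t) cR C₇)ᶜ,
                        mixDensity d K w μ (αbar t) x) ≤
                      C * Real.exp (-(2 * d * Real.log T)) := by
  intro cR hcR
  refine ⟨1, 1, cR + 8, one_pos, one_pos, by positivity, ?_⟩
  intro c₀ c₁ C₇ hc₀ hc₁ hC₇ _
  set B := √(1 + c₁) * (4 * c₁ ^ 2) ^ cR
  have hB : 0 < B := mul_pos (sqrt_pos.mpr (by linarith)) (rpow_pos_of_pos (by positivity) _)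
  refine ⟨exp (2 * B ^ 2) + 2, by positivity, ?_⟩
  intro d K T hd _ hT w μ hw hw1 hμ αbar _ hbase hrec _ _ t ht htT
  have hw0 : ∀ k, 0 ≤ w k := fun k => (hw k).1.le
  by_cases hsmall : d * log T < B ^ 2
  · calc ∫ x in (Aset d K T w μ (αbar t) cR C₇)ᶜ, mixDensity d K w μ (αbar t) x ≤ 1 :=
          setIntegral_mixDensity_le_one μ _ hw0 hw1 _
      _ = exp (2 * d * log T) * exp (-(2 * d * log T)) := by
          rw [← exp_add, add_neg_cancel, exp_zero]
      _ ≤ (exp (2 * B ^ 2) + 2) * exp (-(2 * d * log T)) := by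
          gcongr
          linarith [exp_le_exp.mpr (show 2 * d * log T ≤ 2 * B ^ 2 by linarith)]
  · have hT2 : 2 ≤ T := by
      by_contra h
      obtain rfl : T = 1 := by omega
      simp only [Nat.cast_one, log_one, mul_zero] at hsmall
      exact hsmall (by positivity)
    refine (setIntegral_compl_Aset_le hd hT2 hw0 hw1 hcR.le hC₇ fun k =>
      add_sqrt_le_radius (norm_nonneg _) ?_).trans (by gcongr; linarith [exp_pos (2 * B ^ 2)])
    rcases norm_sqrt_schedule_smul_le hT (by linarith) (by linarith) hcR.le hμ hbase hrec ht htT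
      with h | h
    · exact Or.inl (h k)
    · exact Or.inr ((pow_le_pow_left₀ (norm_nonneg _) (h k) 2).trans (not_lt.mp hsmall))
end

section
/- For every t ∈ [T] and every k ∈ [K] with π_k ≥ 1/(K T³): if C₅ is a sufficiently large absolute constant and C₁ is sufficiently large relative to C₅², then T_k ⊆ { x ∈ ℝ^d : tr(I_d + J_t(x)) ≤ C₁ log(KT) }. -/
open MeasureTheory Real Finset
open scoped RealInnerProductSpace BigOperators

section helpers

variable {d K : ℕ} (w : Fin K → ℝ) (μ : Fin K → EuclideanSpace ℝ (Fin d))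
  (ab : ℝ) (x : EuclideanSpace ℝ (Fin d))

lemma postS_pos (hK : 1 ≤ K) (hw : ∀ i, 0 < w i) :
    0 < ∑ i, w i * Real.exp (-‖x - Real.sqrt ab • μ i‖ ^ 2 / 2) := by
  have : Nonempty (Fin K) := ⟨⟨0, hK⟩⟩
  exact Finset.sum_pos (fun i _ => mul_pos (hw i) (Real.exp_pos _))
    Finset.univ_nonempty

lemma post_nonneg (hK : 1 ≤ K) (hw : ∀ i, 0 < w i) (i : Fin K) :
    0 ≤ postWeight d K w μ ab i x :=
  div_nonneg (mul_nonneg (hw i).le (Real.exp_pos _).le) (postS_pos w μ ab x hK hw).le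

lemma post_sum_one (hK : 1 ≤ K) (hw : ∀ i, 0 < w i) :
    ∑ i, postWeight d K w μ ab i x = 1 := by
  unfold postWeight
  rw [← Finset.sum_div]
  exact div_self (postS_pos w μ ab x hK hw).ne'

lemma post_le (hK : 1 ≤ K) (hw : ∀ i, 0 < w i) (i k : Fin K) :
    postWeight d K w μ ab i x ≤
      (w i / w k) * (Real.exp (-‖x - Real.sqrt ab • μ i‖ ^ 2 / 2) /
        Real.exp (-‖x - Real.sqrt ab • μ k‖ ^ 2 / 2)) := by
  have hS := postS_pos w μ ab x hK hw
  have hden : 0 < w k * Real.exp (-‖x - Real.sqrt ab • μ k‖ ^ 2 / 2) :=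
    mul_pos (hw k) (Real.exp_pos _)
  have hle : w k * Real.exp (-‖x - Real.sqrt ab • μ k‖ ^ 2 / 2) ≤
      ∑ i, w i * Real.exp (-‖x - Real.sqrt ab • μ i‖ ^ 2 / 2) :=
    Finset.single_le_sum (f := fun i => w i * Real.exp (-‖x - Real.sqrt ab • μ i‖ ^ 2 / 2))
      (fun i _ => mul_pos (hw i) (Real.exp_pos _) |>.le) (Finset.mem_univ k)
  have h1 : postWeight d K w μ ab i x ≤
      (w i * Real.exp (-‖x - Real.sqrt ab • μ i‖ ^ 2 / 2)) /
        (w k * Real.exp (-‖x - Real.sqrt ab • μ k‖ ^ 2 / 2)) := by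
    unfold postWeight
    exact div_le_div_of_nonneg_left (mul_nonneg (hw i).le (Real.exp_pos _).le) hden hle
  calc postWeight d K w μ ab i x ≤ _ := h1
    _ = (w i / w k) * (Real.exp (-‖x - Real.sqrt ab • μ i‖ ^ 2 / 2) /
        Real.exp (-‖x - Real.sqrt ab • μ k‖ ^ 2 / 2)) := by
      rw [div_mul_div_comm]

end helpers

lemma aux_var {K : ℕ} (p a : Fin K → ℝ) (c : ℝ) (hp1 : ∑ i, p i = 1) :
    (∑ i, p i * (a i * a i)) - (∑ i, p i * a i) ^ 2 ≤ ∑ i, p i * (a i - c) ^ 2 := by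
  have h1 : ∑ i, p i * (a i - c) ^ 2
      = (∑ i, p i * (a i * a i)) - 2 * c * (∑ i, p i * a i) + c ^ 2 * (∑ i, p i) := by
    rw [Finset.mul_sum, Finset.mul_sum, ← Finset.sum_sub_distrib, ← Finset.sum_add_distrib]
    exact Finset.sum_congr rfl fun i _ => by ring
  rw [h1, hp1]
  nlinarith [sq_nonneg ((∑ i, p i * a i) - c)]

lemma aux_far (C₅ L s : ℝ) (hC : 1 ≤ C₅) (hL : 0 ≤ L) (hs : 0 ≤ s)
    (hfar : (8 * (C₅ + 1)) ^ 2 * L ≤ s ^ 2) :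
    Real.exp (3 * L + C₅ * Real.sqrt L * s - s ^ 2 / 2) * s ^ 2
      ≤ 8 * Real.exp (-(8 * L)) := by
  have hc : (0:ℝ) < 8 * (C₅ + 1) := by linarith
  have hsL : Real.sqrt L * (8 * (C₅ + 1)) ≤ s := by
    have h := Real.sqrt_le_sqrt hfar
    rw [Real.sqrt_mul (by positivity), Real.sqrt_sq hc.le, Real.sqrt_sq hs] at h; linarith
  have hL8 : 3 * L ≤ s ^ 2 / 8 := by
    nlinarith [Real.sq_sqrt hL, Real.sqrt_nonneg L, sq_nonneg C₅]
  have hCs : C₅ * Real.sqrt L * s ≤ s ^ 2 / 8 := by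
    nlinarith [Real.sqrt_nonneg L, mul_le_mul_of_nonneg_right hsL hs]
  have hsq : s ^ 2 ≤ 8 * Real.exp (s ^ 2 / 8) := by
    nlinarith [Real.add_one_le_exp (s ^ 2 / 8)]
  have h1 : Real.exp (3 * L + C₅ * Real.sqrt L * s - s ^ 2 / 2) * s ^ 2
      ≤ Real.exp (3 * L + C₅ * Real.sqrt L * s - s ^ 2 / 2) * (8 * Real.exp (s ^ 2 / 8)) :=
    mul_le_mul_of_nonneg_left hsq (Real.exp_nonneg _)
  have h2 : Real.exp (3 * L + C₅ * Real.sqrt L * s - s ^ 2 / 2) * (8 * Real.exp (s ^ 2 / 8))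
      = 8 * Real.exp (3 * L + C₅ * Real.sqrt L * s - s ^ 2 / 2 + s ^ 2 / 8) := by
    rw [mul_comm, mul_assoc, ← Real.exp_add, add_comm]
  have h3 : 3 * L + C₅ * Real.sqrt L * s - s ^ 2 / 2 + s ^ 2 / 8 ≤ -(8 * L) := by
    nlinarith [sq_nonneg C₅]
  calc Real.exp (3 * L + C₅ * Real.sqrt L * s - s ^ 2 / 2) * s ^ 2
      ≤ 8 * Real.exp (3 * L + C₅ * Real.sqrt L * s - s ^ 2 / 2 + s ^ 2 / 8) := by
        rw [← h2]; exact h1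
    _ ≤ 8 * Real.exp (-(8 * L)) := by
        have := Real.exp_le_exp.mpr h3; linarith



set_option maxHeartbeats 1000000 in
/-- For every `t ∈ [T]` and every `k ∈ [K]` with `π_k ≥ 1/(K T³)`: if `C₅`
is a sufficiently large absolute constant and `C₁` is sufficiently large relative to `C₅²`,
then `T_k ⊆ { x : tr(I_d + J_t(x)) ≤ C₁ log(KT) }`. -/
theorem stmt13 :
    ∃ C₅₀ ρ : ℝ, 0 < C₅₀ ∧ 0 < ρ ∧
      ∀ C₅ C₁ : ℝ, C₅₀ ≤ C₅ → ρ * C₅ ^ 2 ≤ C₁ →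
        ∀ (d K T : ℕ), 1 ≤ d → 1 ≤ K → 1 ≤ T →
          ∀ (w : Fin K → ℝ) (μ : Fin K → EuclideanSpace ℝ (Fin d)),
            (∀ k, w k ∈ Set.Ioo (0 : ℝ) 1) → (∑ k, w k = 1) →
            ∀ (αbar : ℕ → ℝ), (∀ s, αbar s ∈ Set.Ioo (0 : ℝ) 1) →
            ∀ t : ℕ, 1 ≤ t → t ≤ T →
              ∀ k : Fin K, 1 / ((K : ℝ) * (T : ℝ) ^ 3) ≤ w k →
                Tset d K T μ (αbar t) C₅ k ⊆
                  {x | Matrix.trace (1 + gmmJac d K w μ (αbar t) x) ≤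
                    C₁ * Real.log ((K : ℝ) * T)} := by
  refine ⟨1, 268, one_pos, by norm_num, ?_⟩
  intro C₅ C₁ hC₅ hC₁ d K T hd hK hT w μ hw hw1 αbar hαbar t ht1 htT k hk x hx
  simp only [Tset, Set.mem_setOf_eq] at hx
  simp only [Set.mem_setOf_eq]
  obtain ⟨hab0, hab1⟩ := hαbar t
  set ab := αbar t with hab_def
  set L := Real.log ((K : ℝ) * T) with hL_def
  have hwpos : ∀ i, 0 < w i := fun i => (hw i).1
  have hK1 : (1 : ℝ) ≤ (K : ℝ) := by exact_mod_cast hK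
  have hT1 : (1 : ℝ) ≤ (T : ℝ) := by exact_mod_cast hT
  have hKT1 : (1 : ℝ) ≤ (K : ℝ) * T := one_le_mul_of_one_le_of_one_le hK1 hT1
  have hL0 : 0 ≤ L := Real.log_nonneg hKT1
  -- abbreviation
  set P : Fin K → ℝ := fun i => postWeight d K w μ ab i x with hP
  have hP0 : ∀ i, 0 ≤ P i := fun i => post_nonneg w μ ab x hK hwpos i
  have hP1 : ∑ i, P i = 1 := post_sum_one w μ ab x hK hwpos
  -- trace formula
  have htr : Matrix.trace (1 + gmmJac d K w μ ab x)
      = ab * ∑ j, ((∑ i, P i * (μ i j * μ i j)) - (∑ i, P i * μ i j) ^ 2) := by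
    rw [Matrix.trace, Finset.mul_sum]
    refine Finset.sum_congr rfl fun j _ => ?_
    simp only [Matrix.diag_apply, Matrix.add_apply, Matrix.one_apply_eq, gmmJac,
      Matrix.of_apply, eq_self_iff_true, if_true, hP]
    ring
  -- norms coordinatewise
  have hnorm : ∀ i : Fin K, ‖μ i - μ k‖ ^ 2 = ∑ j, (μ i j - μ k j) ^ 2 := by
    intro i
    rw [EuclideanSpace.norm_eq, Real.sq_sqrt (by positivity)]
    refine Finset.sum_congr rfl fun j _ => ?_
    rw [PiLp.sub_apply, Real.norm_eq_abs, sq_abs]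
  -- variance bound
  have hvar : Matrix.trace (1 + gmmJac d K w μ ab x) ≤ ab * ∑ i, P i * ‖μ i - μ k‖ ^ 2 := by
    rw [htr]
    refine mul_le_mul_of_nonneg_left ?_ hab0.le
    calc ∑ j, ((∑ i, P i * (μ i j * μ i j)) - (∑ i, P i * μ i j) ^ 2)
        ≤ ∑ j, ∑ i, P i * (μ i j - μ k j) ^ 2 :=
          Finset.sum_le_sum fun j _ => aux_var P (fun i => μ i j) (μ k j) hP1
      _ = ∑ i, P i * ‖μ i - μ k‖ ^ 2 := by
          rw [Finset.sum_comm]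
          exact Finset.sum_congr rfl fun i _ => by rw [hnorm i, Finset.mul_sum]
  -- per-index bound
  have hmain : ∀ i : Fin K, P i * (ab * ‖μ i - μ k‖ ^ 2)
      ≤ (8 * (C₅ + 1)) ^ 2 * L * P i + 8 * Real.exp (-(8 * L)) := by
    intro i
    set s := Real.sqrt ab * ‖μ i - μ k‖ with hs_def
    have hs0 : 0 ≤ s := mul_nonneg (Real.sqrt_nonneg _) (norm_nonneg _)
    have hs2 : s ^ 2 = ab * ‖μ i - μ k‖ ^ 2 := by
      rw [hs_def, mul_pow, Real.sq_sqrt hab0.le]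
    by_cases hcase : ab * ‖μ i - μ k‖ ^ 2 ≤ (8 * (C₅ + 1)) ^ 2 * L
    · have h1 := mul_le_mul_of_nonneg_left hcase (hP0 i)
      have h8 : 0 ≤ 8 * Real.exp (-(8 * L)) := by positivity
      nlinarith
    · push_neg at hcase
      -- decompose the exponent
      have hxsub : x - Real.sqrt ab • μ i
          = (x - Real.sqrt ab • μ k) - Real.sqrt ab • (μ i - μ k) := by
        rw [smul_sub]; abel
      have hnu : ‖Real.sqrt ab • (μ i - μ k)‖ ^ 2 = s ^ 2 := by
        rw [norm_smul, Real.norm_eq_abs, abs_of_nonneg (Real.sqrt_nonneg _), hs_def]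
      have hdecomp : ‖x - Real.sqrt ab • μ i‖ ^ 2
          = ‖x - Real.sqrt ab • μ k‖ ^ 2
            - 2 * ⟪x - Real.sqrt ab • μ k, Real.sqrt ab • (μ i - μ k)⟫ + s ^ 2 := by
        rw [hxsub, norm_sub_sq_real, hnu]
      have hinner : ⟪x - Real.sqrt ab • μ k, Real.sqrt ab • (μ i - μ k)⟫
          ≤ C₅ * Real.sqrt L * s := by
        have h := (abs_le.mp (hx i)).2
        have hsplit : Real.sqrt (ab * L) = Real.sqrt ab * Real.sqrt L :=
          Real.sqrt_mul hab0.le L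
        calc ⟪x - Real.sqrt ab • μ k, Real.sqrt ab • (μ i - μ k)⟫
            ≤ |⟪x - Real.sqrt ab • μ k, Real.sqrt ab • (μ i - μ k)⟫| := le_abs_self _
          _ ≤ C₅ * Real.sqrt (ab * L) * ‖μ i - μ k‖ := hx i
          _ = C₅ * Real.sqrt L * s := by rw [hsplit, hs_def]; ring
      -- bound on the weight ratio
      have hwk : 0 < (K : ℝ) * (T : ℝ) ^ 3 := by positivity
      have hwk2 : 1 / w k ≤ (K : ℝ) * (T : ℝ) ^ 3 := by
        rw [div_le_iff₀ (hwpos k)]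
        rw [div_le_iff₀ hwk] at hk
        linarith [hk]
      have hKT3 : (K : ℝ) * (T : ℝ) ^ 3 ≤ Real.exp (3 * L) := by
        have hexp : Real.exp L = (K : ℝ) * T := Real.exp_log (by positivity)
        have h3 : Real.exp (3 * L) = ((K : ℝ) * T) ^ 3 := by
          rw [show (3 : ℝ) * L = L + (L + L) by ring, Real.exp_add, Real.exp_add, hexp]
          ring
        rw [h3]
        have hKK : (K : ℝ) ≤ (K : ℝ) ^ 3 := by
          nlinarith [mul_nonneg (mul_nonneg (sub_nonneg.mpr hK1)
            (le_trans zero_le_one hK1)) (by linarith : (0:ℝ) ≤ (K:ℝ) + 1)]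
        have : (K : ℝ) * (T : ℝ) ^ 3 ≤ (K : ℝ) ^ 3 * (T : ℝ) ^ 3 :=
          mul_le_mul_of_nonneg_right hKK (by positivity)
        calc (K : ℝ) * (T : ℝ) ^ 3 ≤ (K : ℝ) ^ 3 * (T : ℝ) ^ 3 := this
          _ = ((K : ℝ) * T) ^ 3 := by ring
      have hwratio : w i / w k ≤ Real.exp (3 * L) := by
        have h1 : w i / w k ≤ 1 / w k := by
          gcongr
          · exact (hwpos k).le
          · exact (hw i).2.le
        linarith
      -- ratio of exponentials
      have heratio : Real.exp (-‖x - Real.sqrt ab • μ i‖ ^ 2 / 2) /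
            Real.exp (-‖x - Real.sqrt ab • μ k‖ ^ 2 / 2)
          ≤ Real.exp (C₅ * Real.sqrt L * s - s ^ 2 / 2) := by
        rw [← Real.exp_sub]
        apply Real.exp_le_exp.mpr
        rw [hdecomp]
        ring_nf
        ring_nf at hinner
        linarith [hinner]
      have hPbound : P i ≤ Real.exp (3 * L + C₅ * Real.sqrt L * s - s ^ 2 / 2) := by
        have h1 := post_le w μ ab x hK hwpos i k
        have h2 : (w i / w k) * (Real.exp (-‖x - Real.sqrt ab • μ i‖ ^ 2 / 2) /
              Real.exp (-‖x - Real.sqrt ab • μ k‖ ^ 2 / 2))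
            ≤ Real.exp (3 * L) * Real.exp (C₅ * Real.sqrt L * s - s ^ 2 / 2) := by
          apply mul_le_mul hwratio heratio (by positivity) (Real.exp_nonneg _)
        rw [hP]
        calc postWeight d K w μ ab i x ≤ _ := h1
          _ ≤ Real.exp (3 * L) * Real.exp (C₅ * Real.sqrt L * s - s ^ 2 / 2) := h2
          _ = Real.exp (3 * L + C₅ * Real.sqrt L * s - s ^ 2 / 2) := by
              rw [← Real.exp_add]; ring_nf
      have hfar := aux_far C₅ L s hC₅ hL0 hs0 (by rw [hs2]; exact hcase.le)
      have hstep : P i * (ab * ‖μ i - μ k‖ ^ 2)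
          ≤ Real.exp (3 * L + C₅ * Real.sqrt L * s - s ^ 2 / 2) * s ^ 2 := by
        rw [← hs2]
        exact mul_le_mul_of_nonneg_right hPbound (sq_nonneg s)
      have hfirst : 0 ≤ (8 * (C₅ + 1)) ^ 2 * L * P i :=
        mul_nonneg (mul_nonneg (sq_nonneg _) hL0) (hP0 i)
      linarith
  -- summing up
  have hsum : ab * ∑ i, P i * ‖μ i - μ k‖ ^ 2
      ≤ (8 * (C₅ + 1)) ^ 2 * L + (K : ℝ) * (8 * Real.exp (-(8 * L))) := by
    have h1 : ab * ∑ i, P i * ‖μ i - μ k‖ ^ 2 = ∑ i, P i * (ab * ‖μ i - μ k‖ ^ 2) := by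
      rw [Finset.mul_sum]
      exact Finset.sum_congr rfl fun i _ => by ring
    rw [h1]
    calc ∑ i, P i * (ab * ‖μ i - μ k‖ ^ 2)
        ≤ ∑ i : Fin K, ((8 * (C₅ + 1)) ^ 2 * L * P i + 8 * Real.exp (-(8 * L))) :=
          Finset.sum_le_sum fun i _ => hmain i
      _ = (8 * (C₅ + 1)) ^ 2 * L * (∑ i, P i) + (K : ℝ) * (8 * Real.exp (-(8 * L))) := by
          rw [Finset.sum_add_distrib, ← Finset.mul_sum, Finset.sum_const, Finset.card_univ,
            Fintype.card_fin, nsmul_eq_mul]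
      _ = (8 * (C₅ + 1)) ^ 2 * L + (K : ℝ) * (8 * Real.exp (-(8 * L))) := by rw [hP1, mul_one]
  by_cases hKT : K * T = 1
  · -- degenerate case K = T = 1
    have hKe : K = 1 := le_antisymm (by
      calc K ≤ K * T := Nat.le_mul_of_pos_right K hT
        _ = 1 := hKT) hK
    have hTe : T = 1 := le_antisymm (by
      calc T ≤ K * T := Nat.le_mul_of_pos_left T hK
        _ = 1 := hKT) hT
    have hKTr : ((K : ℝ) * T) = 1 := by
      have : ((K * T : ℕ) : ℝ) = 1 := by rw [hKT]; norm_num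
      push_cast at this; exact this
    have hLz : L = 0 := by rw [hL_def, hKTr, Real.log_one]
    have hz : ∑ i, P i * ‖μ i - μ k‖ ^ 2 = 0 := by
      refine Finset.sum_eq_zero fun i _ => ?_
      have : i = k := by
        have h1 := i.2; have h2 := k.2
        exact Fin.ext (by omega)
      rw [this]; simp
    have hgoal : C₁ * L = 0 := by rw [hLz, mul_zero]
    rw [hgoal]
    calc Matrix.trace (1 + gmmJac d K w μ ab x) ≤ ab * ∑ i, P i * ‖μ i - μ k‖ ^ 2 := hvar
      _ = 0 := by rw [hz, mul_zero]
  · -- main case: K*T ≥ 2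
    have hKT2 : (2 : ℝ) ≤ (K : ℝ) * T := by
      have : 2 ≤ K * T := by
        have h1 : 1 ≤ K * T := Nat.one_le_of_lt (Nat.lt_of_lt_of_le hK (Nat.le_mul_of_pos_right K hT)) |>.trans (le_refl _)
        omega
      exact_mod_cast this
    have hLlog2 : Real.log 2 ≤ L := by
      rw [hL_def]; exact Real.log_le_log (by norm_num) hKT2
    have hlog2 : (0.6931471803 : ℝ) < Real.log 2 := Real.log_two_gt_d9
    have hKle : (K : ℝ) ≤ Real.exp L := by
      rw [hL_def, Real.exp_log (by positivity)]
      nlinarith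
    have htail : (K : ℝ) * (8 * Real.exp (-(8 * L))) ≤ 12 * L := by
      have h1 : (K : ℝ) * Real.exp (-(8 * L)) ≤ Real.exp L * Real.exp (-(8 * L)) :=
        mul_le_mul_of_nonneg_right hKle (Real.exp_nonneg _)
      have h2 : Real.exp L * Real.exp (-(8 * L)) = Real.exp (-(7 * L)) := by
        rw [← Real.exp_add]; ring_nf
      have h3 : Real.exp (-(7 * L)) ≤ 1 := Real.exp_le_one_iff.mpr (by linarith)
      nlinarith [Real.exp_nonneg (-(8 * L))]
    have hconst : (8 * (C₅ + 1)) ^ 2 + 12 ≤ 268 * C₅ ^ 2 := by nlinarith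
    have hfin : (8 * (C₅ + 1)) ^ 2 * L + 12 * L ≤ C₁ * L := by
      have : ((8 * (C₅ + 1)) ^ 2 + 12) * L ≤ (268 * C₅ ^ 2) * L :=
        mul_le_mul_of_nonneg_right hconst hL0
      have h2 : (268 * C₅ ^ 2) * L ≤ C₁ * L := mul_le_mul_of_nonneg_right hC₁ hL0
      nlinarith
    calc Matrix.trace (1 + gmmJac d K w μ ab x) ≤ ab * ∑ i, P i * ‖μ i - μ k‖ ^ 2 := hvar
      _ ≤ (8 * (C₅ + 1)) ^ 2 * L + (K : ℝ) * (8 * Real.exp (-(8 * L))) := hsum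
      _ ≤ (8 * (C₅ + 1)) ^ 2 * L + 12 * L := by linarith
      _ ≤ C₁ * L := hfin
end

section
/- For every t ∈ [T] and every x ∈ ℝ^d, the squared norm of the diffused GMM score obeys ‖s_t^{⋆GMM}(x)‖₂² ≤ −(2/(1−ᾱ_t)) · log( (2π(1−ᾱ_t))^{d/2} · p_{X_t^GMM}(x) ). -/
/-!
The score is the posterior average `∑ π_k (√ᾱ μ_k - x)`, so by Jensen
`‖s(x)‖² ≤ ∑ π_k ‖x - √ᾱ μ_k‖²`. For the posterior `π_k ∝ w_k exp(-‖x - √ᾱ μ_k‖² / 2)`,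
Gibbs' inequality `KL(π ‖ w) ≥ 0` bounds this average by `-2 log Z`, where
`Z = ∑ w_k exp(-‖x - √ᾱ μ_k‖² / 2) ≤ 1`. Finally `(2π(1-ᾱ))^{d/2} p(x) = (1-ᾱ)^{d/2} Z`, and
`log (1-ᾱ) ≤ 0`, `log Z ≤ 0`, `2 ≤ 2 / (1-ᾱ)` turn `-2 log Z` into the claimed bound.
-/

open MeasureTheory Real Finset
open scoped RealInnerProductSpace BigOperators

theorem Real.log_sum_mul_exp_le_sum_mul {ι : Type*} (s : Finset ι) {w : ι → ℝ} (f : ι → ℝ)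
    (hw : ∀ i ∈ s, 0 < w i) (hsum : ∑ i ∈ s, w i ≤ 1) :
    Real.log (∑ i ∈ s, w i * exp (f i)) ≤
      ∑ i ∈ s, w i * exp (f i) / (∑ j ∈ s, w j * exp (f j)) * f i := by
  rcases s.eq_empty_or_nonempty with rfl | hs
  · simp
  set Z := ∑ j ∈ s, w j * exp (f j)
  have hZ : 0 < Z := sum_pos (fun i hi => mul_pos (hw i hi) (exp_pos _)) hs
  set q : ι → ℝ := fun i => w i * exp (f i) / Z
  have hq : ∀ i ∈ s, 0 < q i := fun i hi => div_pos (mul_pos (hw i hi) (exp_pos _)) hZ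
  have hqsum : ∑ i ∈ s, q i = 1 := by rw [← sum_div, div_self hZ.ne']
  -- Gibbs' inequality, term by term: `q log (w / q) ≤ w - q`.
  have termwise : ∀ i ∈ s, q i * (Real.log Z - f i) ≤ w i - q i := by
    intro i hi
    have hlog : Real.log (w i / q i) = Real.log Z - f i := by
      rw [show w i / q i = Z / exp (f i) by
          rw [div_eq_div_iff (hq i hi).ne' (exp_pos _).ne', mul_div_cancel₀ _ hZ.ne'],
        Real.log_div hZ.ne' (exp_pos _).ne', Real.log_exp]
    have := mul_le_mul_of_nonneg_left
      (Real.log_le_sub_one_of_pos (div_pos (hw i hi) (hq i hi))) (hq i hi).le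
    rwa [hlog, mul_sub_one, mul_div_cancel₀ _ (hq i hi).ne'] at this
  have := sum_le_sum termwise
  simp only [mul_sub, sum_sub_distrib, ← sum_mul, hqsum, one_mul] at this
  linarith

noncomputable def gmmPartition (d K : ℕ) (w : Fin K → ℝ) (μ : Fin K → EuclideanSpace ℝ (Fin d))
    (abar : ℝ) (x : EuclideanSpace ℝ (Fin d)) : ℝ :=
  ∑ k, w k * Real.exp (-‖x - Real.sqrt abar • μ k‖ ^ 2 / 2)

section GaussianMixture

variable {d K : ℕ} {w : Fin K → ℝ} {μ : Fin K → EuclideanSpace ℝ (Fin d)} {abar : ℝ}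
  {x : EuclideanSpace ℝ (Fin d)}

theorem mixDensity_eq_mul_gmmPartition :
    mixDensity d K w μ abar x = (2 * π) ^ (-(d : ℝ) / 2) * gmmPartition d K w μ abar x := by
  simp only [mixDensity, gmmPartition, gaussV, mul_one, mul_sum]
  exact sum_congr rfl fun k _ => by ring

theorem gmmPartition_pos [Nonempty (Fin K)] (hw : ∀ k, 0 < w k) :
    0 < gmmPartition d K w μ abar x :=
  sum_pos (fun k _ => mul_pos (hw k) (exp_pos _)) univ_nonempty

theorem gmmPartition_le_one (hw : ∀ k, 0 ≤ w k) (hsum : ∑ k, w k ≤ 1) :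
    gmmPartition d K w μ abar x ≤ 1 :=
  calc gmmPartition d K w μ abar x ≤ ∑ k, w k :=
        sum_le_sum fun k _ => mul_le_of_le_one_right (hw k) <|
          exp_le_one_iff.2 (by nlinarith [sq_nonneg ‖x - Real.sqrt abar • μ k‖])
    _ ≤ 1 := hsum

theorem postWeight_nonneg (hw : ∀ k, 0 ≤ w k) (k : Fin K) :
    0 ≤ postWeight d K w μ abar k x :=
  div_nonneg (mul_nonneg (hw k) (exp_pos _).le)
    (sum_nonneg fun i _ => mul_nonneg (hw i) (exp_pos _).le)

theorem sum_postWeight (h : gmmPartition d K w μ abar x ≠ 0) :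
    ∑ k, postWeight d K w μ abar k x = 1 := by
  simp only [postWeight]
  rw [← sum_div]
  exact div_self h

theorem gmmScore_eq_sum_postWeight_smul (h : ∑ k, postWeight d K w μ abar k x = 1) :
    gmmScore d K w μ abar x = ∑ k, postWeight d K w μ abar k x • (Real.sqrt abar • μ k - x) := by
  simp only [smul_sub, sum_sub_distrib, ← sum_smul, h, one_smul, smul_comm _ (Real.sqrt abar),
    ← smul_sum, gmmScore]
  abel

theorem norm_gmmScore_sq_le_sum_postWeight_mul (hw : ∀ k, 0 ≤ w k)
    (h : ∑ k, postWeight d K w μ abar k x = 1) :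
    ‖gmmScore d K w μ abar x‖ ^ 2 ≤
      ∑ k, postWeight d K w μ abar k x * ‖x - Real.sqrt abar • μ k‖ ^ 2 := by
  rw [gmmScore_eq_sum_postWeight_smul h]
  simpa only [norm_sub_rev, smul_eq_mul, Pi.pow_apply] using
    ((convexOn_univ_norm (E := EuclideanSpace ℝ (Fin d))).pow (fun _ _ => norm_nonneg _)
      2).map_sum_le (fun k _ => postWeight_nonneg hw k) h
        (fun k _ => Set.mem_univ (Real.sqrt abar • μ k - x))

theorem norm_gmmScore_sq_le_neg_two_mul_log_gmmPartition [Nonempty (Fin K)]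
    (hw : ∀ k, 0 < w k) (hsum : ∑ k, w k ≤ 1) :
    ‖gmmScore d K w μ abar x‖ ^ 2 ≤ -2 * Real.log (gmmPartition d K w μ abar x) := by
  have gibbs : Real.log (gmmPartition d K w μ abar x) ≤
      ∑ k, postWeight d K w μ abar k x * (-‖x - Real.sqrt abar • μ k‖ ^ 2 / 2) :=
    Real.log_sum_mul_exp_le_sum_mul univ _ (fun k _ => hw k) hsum
  have halve : ∑ k, postWeight d K w μ abar k x * (-‖x - Real.sqrt abar • μ k‖ ^ 2 / 2) =
      -(∑ k, postWeight d K w μ abar k x * ‖x - Real.sqrt abar • μ k‖ ^ 2) / 2 := by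
    rw [neg_div, sum_div, ← sum_neg_distrib]
    exact sum_congr rfl fun k _ => by ring
  have hZ : 0 < gmmPartition d K w μ abar x := gmmPartition_pos hw
  have jensen := norm_gmmScore_sq_le_sum_postWeight_mul (fun k => (hw k).le) (sum_postWeight hZ.ne')
  linarith

theorem log_rpow_mul_mixDensity {v : ℝ} (hv : 0 < v) (hZ : 0 < gmmPartition d K w μ abar x) :
    Real.log ((2 * π * v) ^ ((d : ℝ) / 2) * mixDensity d K w μ abar x) =
      (d : ℝ) / 2 * Real.log v + Real.log (gmmPartition d K w μ abar x) := by
  have h2π : 0 < 2 * π := by positivity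
  have hprod : (2 * π * v) ^ ((d : ℝ) / 2) * mixDensity d K w μ abar x =
      v ^ ((d : ℝ) / 2) * gmmPartition d K w μ abar x := by
    rw [mixDensity_eq_mul_gmmPartition, neg_div, Real.rpow_neg h2π.le, Real.mul_rpow h2π.le hv.le]
    field_simp
  rw [hprod, Real.log_mul (Real.rpow_pos_of_pos hv _).ne' hZ.ne', Real.log_rpow hv]

end GaussianMixture

theorem stmt17_general (d K : ℕ) (hK : 1 ≤ K)
    (w : Fin K → ℝ) (μ : Fin K → EuclideanSpace ℝ (Fin d))
    (hw : ∀ k, w k ∈ Set.Ioo (0 : ℝ) 1) (hsum : ∑ k, w k = 1)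
    (αbar : ℕ → ℝ) (hαbar : ∀ s, αbar s ∈ Set.Ioo (0 : ℝ) 1)
    (t : ℕ) (x : EuclideanSpace ℝ (Fin d)) :
    ‖gmmScore d K w μ (αbar t) x‖ ^ 2 ≤
      -(2 / (1 - αbar t)) *
        Real.log ((2 * Real.pi * (1 - αbar t)) ^ ((d : ℝ) / 2) *
          mixDensity d K w μ (αbar t) x) := by
  obtain ⟨ha₀, ha₁⟩ := hαbar t
  have : Nonempty (Fin K) := Fin.pos_iff_nonempty.mp hK
  have hwpos : ∀ k, 0 < w k := fun k => (hw k).1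
  have hZ : 0 < gmmPartition d K w μ (αbar t) x := gmmPartition_pos hwpos
  have hlogZ : Real.log (gmmPartition d K w μ (αbar t) x) ≤ 0 :=
    Real.log_nonpos hZ.le (gmmPartition_le_one (fun k => (hwpos k).le) hsum.le)
  have hlogv : (d : ℝ) / 2 * Real.log (1 - αbar t) ≤ 0 :=
    mul_nonpos_of_nonneg_of_nonpos (by positivity) (Real.log_nonpos (by linarith) (by linarith))
  have hcoef : 2 ≤ 2 / (1 - αbar t) := by rw [le_div_iff₀ (by linarith)]; linarith
  rw [log_rpow_mul_mixDensity (sub_pos.2 ha₁) hZ]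
  calc ‖gmmScore d K w μ (αbar t) x‖ ^ 2
      ≤ -2 * Real.log (gmmPartition d K w μ (αbar t) x) :=
        norm_gmmScore_sq_le_neg_two_mul_log_gmmPartition hwpos hsum.le
    _ ≤ -(2 / (1 - αbar t)) * Real.log (gmmPartition d K w μ (αbar t) x) :=
        mul_le_mul_of_nonpos_right (by linarith) hlogZ
    _ ≤ _ := mul_le_mul_of_nonpos_left (by linarith) (by linarith)

/-- For every noise level `ᾱ_t ∈ (0,1)` and every `x ∈ ℝ^d`, the squared
norm of the diffused-GMM score obeys
`‖s_t^{⋆GMM}(x)‖² ≤ −(2/(1−ᾱ_t)) log((2π(1−ᾱ_t))^{d/2} p_{X_t^GMM}(x))`. -/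
theorem stmt17 (d K T : ℕ) (hd : 1 ≤ d) (hK : 1 ≤ K) (hT : 1 ≤ T)
    (w : Fin K → ℝ) (μ : Fin K → EuclideanSpace ℝ (Fin d))
    (hw : ∀ k, w k ∈ Set.Ioo (0 : ℝ) 1) (hsum : ∑ k, w k = 1)
    (αbar : ℕ → ℝ) (hαbar : ∀ s, αbar s ∈ Set.Ioo (0 : ℝ) 1)
    (t : ℕ) (ht1 : 1 ≤ t) (htT : t ≤ T) (x : EuclideanSpace ℝ (Fin d)) :
    ‖gmmScore d K w μ (αbar t) x‖ ^ 2 ≤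
      -(2 / (1 - αbar t)) *
        Real.log ((2 * Real.pi * (1 - αbar t)) ^ ((d : ℝ) / 2) *
          mixDensity d K w μ (αbar t) x) :=
  stmt17_general d K hK w μ hw hsum αbar hαbar t x
end

section
/- For any α ∈ (0,1), the total variation distance between the Gaussian mixture ∑_{k=1}^K π_k N(μ_k, I_d) and its diffused version ∑_{k=1}^K π_k N(√α μ_k, I_d) satisfies TV( ∑_k π_k N(μ_k, I_d), ∑_k π_k N(√α μ_k, I_d) ) ≤ (1/√2) (1 − α) ∑_{k=1}^K π_k ‖μ_k‖₂. -/
open MeasureTheory Real Finset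
open scoped RealInnerProductSpace BigOperators

/-!
By Cauchy–Schwarz, `∫ |p - q| ≤ ‖√p - √q‖₂ ‖√p + √q‖₂ = 2 √(1 - ρ²)` for probability densities
`p, q` with Bhattacharyya coefficient `ρ = ∫ √p √q`. For `N(m₁, I)` and `N(m₂, I)` the product
`p q` is a multiple of the square of the Gaussian density at the midpoint, so
`ρ = exp (-‖m₁ - m₂‖² / 8)`, and `1 - e^{-t} ≤ t` gives `∫ |p - q| ≤ ‖m₁ - m₂‖`. Comparing the two
mixtures component by component then yields `TV ≤ (1 - √α) / 2 ∑ π_k ‖μ_k‖`, and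
`(1 - √α) / 2 ≤ (1 - α) / √2`.
-/

section

variable {α : Type*} [MeasurableSpace α] {μ : Measure α}

theorem integral_mul_le_sqrt_integral_sq_mul_sqrt_integral_sq {f g : α → ℝ}
    (hf0 : 0 ≤ f) (hg0 : 0 ≤ g) (hf : MemLp f 2 μ) (hg : MemLp g 2 μ) :
    ∫ x, f x * g x ∂μ ≤ √(∫ x, f x ^ 2 ∂μ) * √(∫ x, g x ^ 2 ∂μ) := by
  have two : ENNReal.ofReal 2 = 2 := by norm_num
  have h := integral_mul_le_Lp_mul_Lq_of_nonneg (μ := μ) Real.HolderConjugate.two_two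
    (Filter.Eventually.of_forall hf0) (Filter.Eventually.of_forall hg0)
    (two ▸ hf) (two ▸ hg)
  simp only [Real.rpow_two] at h
  rwa [Real.sqrt_eq_rpow, Real.sqrt_eq_rpow]

/-- Le Cam's inequality. -/
theorem integral_abs_sub_le_two_mul_sqrt_one_sub_sq {p q : α → ℝ} (hp0 : 0 ≤ p) (hq0 : 0 ≤ q)
    (hp : Integrable p μ) (hq : Integrable q μ) (hp1 : ∫ x, p x ∂μ = 1)
    (hq1 : ∫ x, q x ∂μ = 1) :
    ∫ x, |p x - q x| ∂μ ≤ 2 * √(1 - (∫ x, √(p x) * √(q x) ∂μ) ^ 2) := by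
  have sqrt_memLp {r : α → ℝ} (hr0 : 0 ≤ r) (hr : Integrable r μ) : MemLp (fun x => √(r x)) 2 μ :=
    (memLp_two_iff_integrable_sq
      (Real.continuous_sqrt.comp_aestronglyMeasurable hr.aestronglyMeasurable)).2
      (hr.congr (Filter.Eventually.of_forall fun x => (Real.sq_sqrt (hr0 x)).symm))
  have hsp := sqrt_memLp hp0 hp
  have hsq := sqrt_memLp hq0 hq
  set ρ := ∫ x, √(p x) * √(q x) ∂μ
  have hpq : Integrable (fun x => √(p x) * √(q x)) μ := hsp.integrable_mul hsq
  have hρ0 : 0 ≤ ρ := integral_nonneg fun x => by positivity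
  have integral_sq {s : ℝ} (hs : s ^ 2 = 1) :
      ∫ x, (√(p x) + s * √(q x)) ^ 2 ∂μ = 2 + 2 * s * ρ := by
    have expand : ∀ x, (√(p x) + s * √(q x)) ^ 2 = p x + q x + 2 * s * (√(p x) * √(q x)) :=
      fun x => by
        linear_combination Real.sq_sqrt (hp0 x) + q x * hs + s ^ 2 * Real.sq_sqrt (hq0 x)
    simp only [expand]
    rw [integral_add (f := fun x => p x + q x) (hp.add hq) (hpq.const_mul _), integral_add hp hq,
      integral_const_mul, hp1, hq1]
    ring
  have hsplit : ∀ x, |p x - q x| = |√(p x) - √(q x)| * (√(p x) + √(q x)) := fun x => by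
    rw [← abs_of_nonneg (by positivity : 0 ≤ √(p x) + √(q x)), ← abs_mul]
    congr 1
    linear_combination Real.sq_sqrt (hq0 x) - Real.sq_sqrt (hp0 x)
  calc ∫ x, |p x - q x| ∂μ = ∫ x, |√(p x) - √(q x)| * (√(p x) + √(q x)) ∂μ := by
        simp only [hsplit]
    _ ≤ √(∫ x, |√(p x) - √(q x)| ^ 2 ∂μ) * √(∫ x, (√(p x) + √(q x)) ^ 2 ∂μ) :=
        integral_mul_le_sqrt_integral_sq_mul_sqrt_integral_sq (fun x => abs_nonneg _)
          (fun x => by positivity) (hsp.sub hsq).abs (hsp.add hsq)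
    _ = √((2 - 2 * ρ) * (2 + 2 * ρ)) := by
        have hminus := integral_sq (s := -1) (by norm_num)
        have hplus := integral_sq (s := 1) (by norm_num)
        simp only [neg_one_mul, ← sub_eq_add_neg, one_mul] at hminus hplus
        simp only [sq_abs, hminus, hplus, Real.sqrt_mul' _ (by positivity : 0 ≤ 2 + 2 * ρ)]
        ring_nf
    _ = 2 * √(1 - ρ ^ 2) := by
        rw [show (2 - 2 * ρ) * (2 + 2 * ρ) = 2 ^ 2 * (1 - ρ ^ 2) by ring,
          Real.sqrt_mul (by positivity), Real.sqrt_sq zero_le_two]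

theorem integral_abs_sum_mul_sub_sum_mul_le {ι : Type*} (s : Finset ι) {w : ι → ℝ}
    (hw : ∀ k ∈ s, 0 ≤ w k) {p q : ι → α → ℝ} (hp : ∀ k ∈ s, Integrable (p k) μ)
    (hq : ∀ k ∈ s, Integrable (q k) μ) :
    ∫ x, |∑ k ∈ s, w k * p k x - ∑ k ∈ s, w k * q k x| ∂μ ≤
      ∑ k ∈ s, w k * ∫ x, |p k x - q k x| ∂μ := by
  have hdiff : ∀ k ∈ s, Integrable (fun x => |p k x - q k x|) μ := fun k hk =>
    ((hp k hk).sub (hq k hk)).abs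
  simp only [← integral_const_mul]
  rw [← integral_finsetSum s fun k hk => (hdiff k hk).const_mul (w k)]
  refine integral_mono_of_nonneg (Filter.Eventually.of_forall fun x => abs_nonneg _)
    (integrable_finsetSum s fun k hk => (hdiff k hk).const_mul (w k))
    (Filter.Eventually.of_forall fun x => ?_)
  calc |∑ k ∈ s, w k * p k x - ∑ k ∈ s, w k * q k x|
      = |∑ k ∈ s, w k * (p k x - q k x)| := by simp only [mul_sub, Finset.sum_sub_distrib]
    _ ≤ ∑ k ∈ s, |w k * (p k x - q k x)| := Finset.abs_sum_le_sum_abs _ _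
    _ = ∑ k ∈ s, w k * |p k x - q k x| := Finset.sum_congr rfl fun k hk => by
        rw [abs_mul, abs_of_nonneg (hw k hk)]

end

section Gaussian

variable {d : ℕ} {v : ℝ}

theorem gaussV_nonneg (hv : 0 ≤ v) (m x : EuclideanSpace ℝ (Fin d)) : 0 ≤ gaussV d v m x := by
  unfold gaussV
  positivity

theorem integral_gaussV (hv : 0 < v) (m : EuclideanSpace ℝ (Fin d)) :
    ∫ x, gaussV d v m x = 1 := by
  have hexp : ∀ x : EuclideanSpace ℝ (Fin d),
      rexp (-‖x - m‖ ^ 2 / (2 * v)) = rexp (-(2 * v)⁻¹ * ‖x - m‖ ^ 2) := fun x => by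
    rw [neg_mul, neg_div, div_eq_inv_mul]
  simp only [gaussV, hexp]
  rw [integral_const_mul, integral_sub_right_eq_self (fun x => rexp (-(2 * v)⁻¹ * ‖x‖ ^ 2)) m,
    GaussianFourier.integral_rexp_neg_mul_sq_norm (by positivity), finrank_euclideanSpace_fin,
    show π / (2 * v)⁻¹ = 2 * π * v by field_simp, ← Real.rpow_add (by positivity),
    neg_div, neg_add_cancel, Real.rpow_zero]

theorem integrable_gaussV (hv : 0 < v) (m : EuclideanSpace ℝ (Fin d)) :
    Integrable (gaussV d v m) :=
  Integrable.of_integral_ne_zero (by rw [integral_gaussV hv m]; exact one_ne_zero)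

theorem gaussV_one_mul_gaussV_one (m₁ m₂ x : EuclideanSpace ℝ (Fin d)) :
    gaussV d 1 m₁ x * gaussV d 1 m₂ x =
      (rexp (-‖m₁ - m₂‖ ^ 2 / 8) * gaussV d 1 ((2 : ℝ)⁻¹ • (m₁ + m₂)) x) ^ 2 := by
  have parallelogram : ‖x - m₁‖ ^ 2 + ‖x - m₂‖ ^ 2 =
      2 * ‖x - (2 : ℝ)⁻¹ • (m₁ + m₂)‖ ^ 2 + ‖m₁ - m₂‖ ^ 2 / 2 := by
    have h := parallelogram_law_with_norm ℝ (x - m₁) (x - m₂)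
    rw [show x - m₁ + (x - m₂) = (2 : ℝ) • (x - (2 : ℝ)⁻¹ • (m₁ + m₂)) by module,
      show x - m₁ - (x - m₂) = -(m₁ - m₂) by abel, norm_neg, norm_smul, Real.norm_ofNat] at h
    linarith
  set c := (2 * π * 1) ^ (-(d : ℝ) / 2)
  calc c * rexp (-‖x - m₁‖ ^ 2 / (2 * 1)) * (c * rexp (-‖x - m₂‖ ^ 2 / (2 * 1)))
      = c ^ 2 * rexp (2 * (-‖m₁ - m₂‖ ^ 2 / 8 + -‖x - (2 : ℝ)⁻¹ • (m₁ + m₂)‖ ^ 2 / (2 * 1))) := by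
        rw [mul_mul_mul_comm, ← Real.exp_add, ← pow_two]
        congr 2
        linarith
    _ = _ := by
        rw [two_mul, Real.exp_add, Real.exp_add, gaussV]
        ring

theorem integral_abs_gaussV_sub_gaussV_le (m₁ m₂ : EuclideanSpace ℝ (Fin d)) :
    ∫ x, |gaussV d 1 m₁ x - gaussV d 1 m₂ x| ≤ ‖m₁ - m₂‖ := by
  have hρ : ∫ x, √(gaussV d 1 m₁ x) * √(gaussV d 1 m₂ x) = rexp (-‖m₁ - m₂‖ ^ 2 / 8) := by
    have hsqrt : ∀ x, √(gaussV d 1 m₁ x) * √(gaussV d 1 m₂ x) =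
        rexp (-‖m₁ - m₂‖ ^ 2 / 8) * gaussV d 1 ((2 : ℝ)⁻¹ • (m₁ + m₂)) x := fun x => by
      rw [← Real.sqrt_mul (gaussV_nonneg zero_le_one m₁ x), gaussV_one_mul_gaussV_one,
        Real.sqrt_sq (mul_nonneg (Real.exp_nonneg _) (gaussV_nonneg zero_le_one _ x))]
    simp only [hsqrt]
    rw [integral_const_mul, integral_gaussV one_pos, mul_one]
  have hLeCam := integral_abs_sub_le_two_mul_sqrt_one_sub_sq (gaussV_nonneg zero_le_one m₁)
    (gaussV_nonneg zero_le_one m₂) (integrable_gaussV one_pos m₁) (integrable_gaussV one_pos m₂)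
    (integral_gaussV one_pos m₁) (integral_gaussV one_pos m₂)
  have hexp : 1 - rexp (-‖m₁ - m₂‖ ^ 2 / 8) ^ 2 ≤ (‖m₁ - m₂‖ / 2) ^ 2 := by
    rw [← Real.exp_nat_mul]
    linarith [Real.add_one_le_exp (2 * (-‖m₁ - m₂‖ ^ 2 / 8))]
  calc ∫ x, |gaussV d 1 m₁ x - gaussV d 1 m₂ x|
      ≤ 2 * √(1 - rexp (-‖m₁ - m₂‖ ^ 2 / 8) ^ 2) := hρ ▸ hLeCam
    _ ≤ 2 * √((‖m₁ - m₂‖ / 2) ^ 2) := by gcongr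
    _ = ‖m₁ - m₂‖ := by rw [Real.sqrt_sq (by positivity)]; ring

end Gaussian

theorem tvDist_mixDensity_le {d K : ℕ} {w : Fin K → ℝ} (hw : ∀ k, 0 ≤ w k)
    (μ : Fin K → EuclideanSpace ℝ (Fin d)) (a b : ℝ) :
    tvDist d (mixDensity d K w μ b) (mixDensity d K w μ a) ≤
      |√b - √a| / 2 * ∑ k, w k * ‖μ k‖ := by
  have hL1 := integral_abs_sum_mul_sub_sum_mul_le Finset.univ (fun k _ => hw k)
    (p := fun k => gaussV d 1 (√b • μ k)) (q := fun k => gaussV d 1 (√a • μ k))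
    (fun k _ => integrable_gaussV one_pos _) (fun k _ => integrable_gaussV one_pos _)
  calc tvDist d (mixDensity d K w μ b) (mixDensity d K w μ a)
      ≤ 1 / 2 * ∑ k, w k * ‖√b • μ k - √a • μ k‖ := by
        unfold tvDist mixDensity
        gcongr
        refine hL1.trans (Finset.sum_le_sum fun k _ => ?_)
        gcongr
        · exact hw k
        · exact integral_abs_gaussV_sub_gaussV_le _ _
    _ = |√b - √a| / 2 * ∑ k, w k * ‖μ k‖ := by
        simp only [← sub_smul, norm_smul, Real.norm_eq_abs, Finset.mul_sum]
        exact Finset.sum_congr rfl fun k _ => by ring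

theorem stmt18_general (d K : ℕ)
    (w : Fin K → ℝ) (μ : Fin K → EuclideanSpace ℝ (Fin d))
    (hw : ∀ k, w k ∈ Set.Ioo (0 : ℝ) 1)
    (a : ℝ) (ha : a ∈ Set.Ioo (0 : ℝ) 1) :
    tvDist d (mixDensity d K w μ 1) (mixDensity d K w μ a) ≤
      (1 / Real.sqrt 2) * (1 - a) * ∑ k, w k * ‖μ k‖ := by
  obtain ⟨ha0, ha1⟩ := ha
  have hsqrt_le_one : √a ≤ 1 := Real.sqrt_le_one.mpr ha1.le
  have hle_sqrt : a ≤ √a := by nlinarith [Real.sq_sqrt ha0.le, Real.sqrt_nonneg a]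
  have hhalf : 1 / 2 ≤ 1 / √2 := by
    gcongr
    rw [Real.sqrt_le_left] <;> norm_num
  calc tvDist d (mixDensity d K w μ 1) (mixDensity d K w μ a)
      ≤ |√1 - √a| / 2 * ∑ k, w k * ‖μ k‖ := tvDist_mixDensity_le (fun k => (hw k).1.le) μ a 1
    _ ≤ 1 / √2 * (1 - a) * ∑ k, w k * ‖μ k‖ := by
        rw [Real.sqrt_one, abs_of_nonneg (by linarith)]
        gcongr ?_ * _
        · exact Finset.sum_nonneg fun k _ => mul_nonneg (hw k).1.le (norm_nonneg _)
        · calc (1 - √a) / 2 ≤ 1 / 2 * (1 - a) := by linarith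
            _ ≤ 1 / √2 * (1 - a) := by gcongr

/-- For any `α ∈ (0,1)`, the total variation distance between the Gaussian
mixture `∑_k π_k N(μ_k, I_d)` and its diffused version `∑_k π_k N(√α μ_k, I_d)` satisfies
`TV ≤ (1/√2) (1 − α) ∑_k π_k ‖μ_k‖₂`. -/
theorem stmt18 (d K : ℕ) (hd : 1 ≤ d) (hK : 1 ≤ K)
    (w : Fin K → ℝ) (μ : Fin K → EuclideanSpace ℝ (Fin d))
    (hw : ∀ k, w k ∈ Set.Ioo (0 : ℝ) 1) (hsum : ∑ k, w k = 1)
    (a : ℝ) (ha : a ∈ Set.Ioo (0 : ℝ) 1) :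
    tvDist d (mixDensity d K w μ 1) (mixDensity d K w μ a) ≤
      (1 / Real.sqrt 2) * (1 - a) * ∑ k, w k * ‖μ k‖ :=
  stmt18_general d K w μ hw a ha
end
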